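/- Under the standing assumptions on φ and φ_λ: (i) for all λ₁ > λ₂ > 0 and all x ∈ H, φ_{λ₁}(x) ≥ φ_{λ₂}(x) ≥ φ(x); and (ii) for every x ∈ H, inf_{λ>0} φ_λ(x) = φ(x); equivalently, for every sequence λ_k → 0⁺ one has φ_{λ_k}(x) → φ(x). (Theorem 3.1(a).) -/

import Mathlib

open Filter Topology MeasureTheory

/-- The Moreau envelope of a function `S : H × E → ℝ` (in two arguments) with parameter
`lam`, for the Hilbert norm of the product. -/
noncomputable def moreauEnv2 {H E : Type*} [NormedAddCommGroup H] [InnerProductSpace ℝ H]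
    [NormedAddCommGroup E] [InnerProductSpace ℝ E]
    (S : H → E → ℝ) (lam : ℝ) (x : H) (z : E) : ℝ :=
  ⨅ u : H × E, (S u.1 u.2 + (‖x - u.1‖ ^ 2 + ‖z - u.2‖ ^ 2) / (2 * lam))

/-- Weak (sequential) convergence in a Hilbert space: `⟪x_k, y⟫ → ⟪x₀, y⟫` for every `y`. -/
def WeakSeqTendsto {H : Type*} [NormedAddCommGroup H] [InnerProductSpace ℝ H]
    (x : ℕ → H) (x₀ : H) : Prop :=
  ∀ y : H, Tendsto (fun k => (inner ℝ (x k) y : ℝ)) atTop (𝓝 (inner ℝ x₀ y))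

/-!
The Moreau envelope `M_λ S` increases to `S` as `λ ↓ 0`, as soon as `S` is lower semicontinuous
and has a continuous affine minorant (the supremum of the convex continuous scalarizations has
one). Hence the sublevel sets `{M_λ S(x, ·) ≤ c}` decrease to `{S(x, ·) ≤ c}`, and continuity of
the measure from above gives `φ_λ(x) ↓ φ(x)`. The affine minorant makes the infimum defining
`M_λ S` bounded below, and forces near-minimizers of the Moreau objective to approach `(x, z)`
as `λ → 0`.
-/

theorem ConvexOn.exists_affine_minorant {E : Type*} [AddCommGroup E] [Module ℝ E]
    [TopologicalSpace E] [IsTopologicalAddGroup E] [ContinuousSMul ℝ E] [LocallyConvexSpace ℝ E]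
    {g : E → ℝ} (hlsc : LowerSemicontinuous g) (hconv : ConvexOn ℝ Set.univ g) :
    ∃ (l : E →L[ℝ] ℝ) (b : ℝ), ∀ u, l u + b ≤ g u := by
  obtain ⟨l, b, hle, -⟩ := hconv.exists_affine_le_of_lt (𝕜 := ℝ) (Set.mem_univ 0)
    (sub_one_lt (g 0)) isClosed_univ (lowerSemicontinuousOn_univ_iff.2 hlsc)
  exact ⟨l, b, fun u => hle ⟨u, Set.mem_univ u⟩⟩

theorem WeakDual.bddAbove_range_eval_add {Y : Type*} [NormedAddCommGroup Y] [NormedSpace ℝ Y]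
    {C : Set (WeakDual ℝ Y)} (hC : IsCompact C) (y : Y) (a : ℝ) :
    BddAbove (Set.range fun v : C => (v : WeakDual ℝ Y) y + a) := by
  have hf : Continuous fun v : WeakDual ℝ Y => v y + a :=
    (WeakDual.eval_continuous y).add continuous_const
  simpa only [Set.image_eq_range] using (hC.image hf).bddAbove

theorem WeakDual.lowerSemicontinuous_iSup_eval_add {X Y : Type*} [TopologicalSpace X]
    [NormedAddCommGroup Y] [NormedSpace ℝ Y] {C : Set (WeakDual ℝ Y)} (hC : IsCompact C)
    {g : X → Y} {k : X → ℝ} (hg : Continuous g) (hk : Continuous k) :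
    LowerSemicontinuous fun q => ⨆ v : C, (v : WeakDual ℝ Y) (g q) + k q :=
  lowerSemicontinuous_ciSup (fun _ => bddAbove_range_eval_add hC _ _) fun v =>
    ((map_continuous (v : WeakDual ℝ Y)).comp hg |>.add hk).lowerSemicontinuous

theorem norm_prod_sub_sq_le {H E : Type*} [SeminormedAddCommGroup H] [SeminormedAddCommGroup E]
    (x : H) (z : E) (u : H × E) :
    ‖(x, z) - u‖ ^ 2 ≤ ‖x - u.1‖ ^ 2 + ‖z - u.2‖ ^ 2 := by
  rw [Prod.norm_def, Prod.fst_sub, Prod.snd_sub]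
  rcases le_total ‖x - u.1‖ ‖z - u.2‖ with h | h
  · rw [max_eq_right h]; nlinarith [norm_nonneg (x - u.1)]
  · rw [max_eq_left h]; nlinarith [norm_nonneg (z - u.2)]

section Moreau

variable {H E : Type*} [NormedAddCommGroup H] [InnerProductSpace ℝ H]
  [NormedAddCommGroup E] [InnerProductSpace ℝ E]

noncomputable def moreauObjective (S : H → E → ℝ) (lam : ℝ) (x : H) (z : E) (u : H × E) : ℝ :=
  S u.1 u.2 + (‖x - u.1‖ ^ 2 + ‖z - u.2‖ ^ 2) / (2 * lam)

theorem moreauEnv2_eq_iInf (S : H → E → ℝ) (lam : ℝ) (x : H) (z : E) :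
    moreauEnv2 S lam x z = ⨅ u, moreauObjective S lam x z u :=
  rfl

variable {S : H → E → ℝ} {l : (H × E) →L[ℝ] ℝ} {b : ℝ}

theorem affine_sub_le_moreauObjective (hlb : ∀ u : H × E, l u + b ≤ S u.1 u.2) {lam : ℝ}
    (hlam : 0 < lam) (x : H) (z : E) (u : H × E) :
    l (x, z) + b - ‖l‖ ^ 2 * lam / 2 ≤ moreauObjective S lam x z u := by
  set d := ‖(x, z) - u‖
  have hlu : l (x, z) - ‖l‖ * d ≤ l u := by
    have h := (le_abs_self _).trans (l.le_opNorm ((x, z) - u))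
    rw [map_sub] at h
    linarith
  -- AM-GM: `‖l‖ d ≤ ‖l‖² λ / 2 + d² / (2λ)`
  have hamgm : ‖l‖ * d ≤ ‖l‖ ^ 2 * lam / 2 + d ^ 2 / (2 * lam) := by
    rw [div_add_div _ _ two_ne_zero (by positivity), le_div_iff₀ (by positivity)]
    nlinarith [sq_nonneg (‖l‖ * lam - d)]
  have hpen : d ^ 2 / (2 * lam) ≤ (‖x - u.1‖ ^ 2 + ‖z - u.2‖ ^ 2) / (2 * lam) :=
    div_le_div_of_nonneg_right (norm_prod_sub_sq_le x z u) (by positivity)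
  have := hlb u
  unfold moreauObjective
  linarith

theorem bddBelow_range_moreauObjective (hlb : ∀ u : H × E, l u + b ≤ S u.1 u.2) {lam : ℝ}
    (hlam : 0 < lam) (x : H) (z : E) :
    BddBelow (Set.range (moreauObjective S lam x z)) :=
  ⟨_, Set.forall_mem_range.2 (affine_sub_le_moreauObjective hlb hlam x z)⟩

theorem moreauEnv2_le_self (hlb : ∀ u : H × E, l u + b ≤ S u.1 u.2) {lam : ℝ} (hlam : 0 < lam)
    (x : H) (z : E) : moreauEnv2 S lam x z ≤ S x z := by
  rw [moreauEnv2_eq_iInf]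
  exact (ciInf_le (bddBelow_range_moreauObjective hlb hlam x z) (x, z)).trans_eq
    (by simp [moreauObjective])

theorem moreauEnv2_anti (hlb : ∀ u : H × E, l u + b ≤ S u.1 u.2) {lam₁ lam₂ : ℝ}
    (hlam₂ : 0 < lam₂) (hle : lam₂ ≤ lam₁) (x : H) (z : E) :
    moreauEnv2 S lam₁ x z ≤ moreauEnv2 S lam₂ x z := by
  refine ciInf_mono (bddBelow_range_moreauObjective hlb (hlam₂.trans_le hle) x z) fun u => ?_
  gcongr

theorem upperSemicontinuous_moreauEnv2 (hlb : ∀ u : H × E, l u + b ≤ S u.1 u.2) {lam : ℝ}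
    (hlam : 0 < lam) (x : H) : UpperSemicontinuous (moreauEnv2 S lam x) :=
  upperSemicontinuous_ciInf (bddBelow_range_moreauObjective hlb hlam x) fun u =>
    (by unfold moreauObjective; fun_prop : Continuous fun z => moreauObjective S lam x z u)
      |>.upperSemicontinuous

theorem norm_prod_sub_sq_le_of_moreauObjective_le (hlb : ∀ u : H × E, l u + b ≤ S u.1 u.2)
    {lam c : ℝ} (hlam : 0 < lam) {x : H} {z : E} {u : H × E}
    (hu : moreauObjective S lam x z u ≤ c) :
    ‖(x, z) - u‖ ^ 2 ≤ 4 * lam * (c - (l (x, z) + b) + ‖l‖ ^ 2 * lam) := by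
  -- the objective for `2λ` is the one for `λ` minus `q / (4λ)`, where `q` is the penalty
  have h2 := affine_sub_le_moreauObjective hlb (by positivity : 0 < 2 * lam) x z u
  have hsplit : moreauObjective S lam x z u = moreauObjective S (2 * lam) x z u
      + (‖x - u.1‖ ^ 2 + ‖z - u.2‖ ^ 2) / (4 * lam) := by
    unfold moreauObjective
    field_simp
    ring
  have hq : (‖x - u.1‖ ^ 2 + ‖z - u.2‖ ^ 2) / (4 * lam) ≤
      c - (l (x, z) + b) + ‖l‖ ^ 2 * lam := by
    linarith
  rw [div_le_iff₀ (by positivity)] at hq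
  linarith [norm_prod_sub_sq_le x z u]

theorem le_of_forall_moreauEnv2_le (hlb : ∀ u : H × E, l u + b ≤ S u.1 u.2)
    (hlsc : LowerSemicontinuous fun u : H × E => S u.1 u.2) {x : H} {z : E} {c : ℝ}
    (hle : ∀ lam, 0 < lam → moreauEnv2 S lam x z ≤ c) : S x z ≤ c := by
  have hex : ∀ lam : ℝ, 0 < lam → ∃ u, moreauObjective S lam x z u < c + lam :=
    fun lam hlam => exists_lt_of_ciInf_lt ((hle lam hlam).trans_lt (lt_add_of_pos_right c hlam))
  choose! u hu using hex
  have hpos : ∀ᶠ lam in 𝓝[>] (0 : ℝ), 0 < lam := self_mem_nhdsWithin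
  have hu_lim : Tendsto u (𝓝[>] 0) (𝓝 (x, z)) := by
    have hbound : Tendsto (fun lam => 4 * lam * (c + lam - (l (x, z) + b) + ‖l‖ ^ 2 * lam))
        (𝓝[>] 0) (𝓝 0) := by
      have hcont : Continuous fun lam : ℝ =>
          4 * lam * (c + lam - (l (x, z) + b) + ‖l‖ ^ 2 * lam) := by fun_prop
      simpa using (hcont.tendsto 0).mono_left nhdsWithin_le_nhds
    have hsq : Tendsto (fun lam => ‖(x, z) - u lam‖ ^ 2) (𝓝[>] 0) (𝓝 0) :=
      squeeze_zero' (Eventually.of_forall fun _ => by positivity)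
        (hpos.mono fun lam hlam =>
          norm_prod_sub_sq_le_of_moreauObjective_le hlb hlam (hu lam hlam).le) hbound
    rw [tendsto_iff_norm_sub_tendsto_zero]
    simpa [norm_sub_rev] using hsq.sqrt
  by_contra! hc
  obtain ⟨y, hcy, hyS⟩ := exists_between hc
  have hS_gt : ∀ᶠ lam in 𝓝[>] 0, y < S (u lam).1 (u lam).2 :=
    hu_lim.eventually (hlsc (x, z) y hyS)
  have hslack : ∀ᶠ lam in 𝓝[>] (0 : ℝ), c + lam < y :=
    ((tendsto_const_nhds.add tendsto_id).mono_left nhdsWithin_le_nhds).eventually_lt_const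
      (by simpa using hcy)
  obtain ⟨lam, hS_gt, hslack, hlam⟩ := (hS_gt.and (hslack.and hpos)).exists
  have hpen : S (u lam).1 (u lam).2 ≤ moreauObjective S lam x z (u lam) :=
    le_add_of_nonneg_right (by positivity)
  linarith [hu lam hlam]

theorem tendsto_measure_moreauEnv2_le [MeasurableSpace E] [OpensMeasurableSpace E]
    {Ω : Type*} [MeasurableSpace Ω] (μ : Measure Ω) [IsFiniteMeasure μ] {ξ : Ω → E}
    (hξ : Measurable ξ) (hlb : ∀ u : H × E, l u + b ≤ S u.1 u.2)
    (hlsc : LowerSemicontinuous fun u : H × E => S u.1 u.2) (x : H) (c : ℝ) :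
    Tendsto (fun lam => μ {ω | moreauEnv2 S lam x (ξ ω) ≤ c}) (𝓝[>] 0)
      (𝓝 (μ {ω | S x (ξ ω) ≤ c})) := by
  have hlim := tendsto_measure_biInter_gt (μ := μ) (a := 0)
    (s := fun lam => {ω | moreauEnv2 S lam x (ξ ω) ≤ c})
    (fun lam hlam => (measurableSet_le
      ((upperSemicontinuous_moreauEnv2 hlb hlam x).measurable.comp hξ)
      measurable_const).nullMeasurableSet)
    (fun _ _ hi hij _ hω => (moreauEnv2_anti hlb hi hij x _).trans hω)
    ⟨1, one_pos, measure_ne_top μ _⟩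
  have hinter : ⋂ lam > 0, {ω | moreauEnv2 S lam x (ξ ω) ≤ c} = {ω | S x (ξ ω) ≤ c} := by
    ext ω
    simp only [Set.mem_iInter, Set.mem_ofPred_eq]
    exact ⟨le_of_forall_moreauEnv2_le hlb hlsc,
      fun hS lam hlam => (moreauEnv2_le_self hlb hlam x _).trans hS⟩
  rwa [hinter] at hlim

end Moreau

theorem iInf_pos_eq_of_tendsto_nhdsGT {f : ℝ → ℝ} {a : ℝ} (hlow : ∀ t, 0 < t → a ≤ f t)
    (hf : Tendsto f (𝓝[>] 0) (𝓝 a)) : ⨅ t : {t : ℝ // 0 < t}, f t = a := by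
  have : Nonempty {t : ℝ // 0 < t} := ⟨⟨1, one_pos⟩⟩
  refine le_antisymm (ge_of_tendsto hf ?_) (le_ciInf fun t => hlow t t.2)
  filter_upwards [self_mem_nhdsWithin] with t ht
  exact ciInf_le ⟨a, Set.forall_mem_range.2 fun t : {t : ℝ // 0 < t} => hlow t t.2⟩ ⟨t, ht⟩

theorem stmt4_general
    {H Y : Type*} [NormedAddCommGroup H] [InnerProductSpace ℝ H]
    [NormedAddCommGroup Y] [NormedSpace ℝ Y] {m : ℕ}
    {Ω : Type*} [MeasurableSpace Ω] (P : Measure Ω) [IsProbabilityMeasure P]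
    (ξ : Ω → EuclideanSpace ℝ (Fin m)) (hξ : Measurable ξ)
    (C : Set (WeakDual ℝ Y)) (hCne : C.Nonempty) (hCcpt : IsCompact C)
    (Φ : H → EuclideanSpace ℝ (Fin m) → Y)
    (hΦ : Continuous fun q : H × EuclideanSpace ℝ (Fin m) => Φ q.1 q.2)
    (h : H → ℝ) (hC1 : ContDiff ℝ 1 h)
    (hscal : ∀ v ∈ C, ConvexOn ℝ Set.univ
      (fun q : H × EuclideanSpace ℝ (Fin m) => v (Φ q.1 q.2) + h q.1))
    (S : H → EuclideanSpace ℝ (Fin m) → ℝ)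
    (hS : ∀ x z, S x z = ⨆ v : C, ((v : WeakDual ℝ Y) (Φ x z) + h x))
    (φ : H → ℝ)
    (hφ : ∀ x, φ x = (P {ω | S x (ξ ω) ≤ h x}).toReal)
    (φl : ℝ → H → ℝ)
    (hφl : ∀ lam x, φl lam x = (P {ω | moreauEnv2 S lam x (ξ ω) ≤ h x}).toReal)
    :
    (∀ lam₁ lam₂ : ℝ, 0 < lam₂ → lam₂ < lam₁ → ∀ x : H,
      φ x ≤ φl lam₂ x ∧ φl lam₂ x ≤ φl lam₁ x) ∧
    (∀ x : H, (⨅ lam : {l : ℝ // 0 < l}, φl lam x) = φ x) ∧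
    (∀ x : H, ∀ lam : ℕ → ℝ, (∀ k, 0 < lam k) → Tendsto lam atTop (𝓝 0) →
      Tendsto (fun k => φl (lam k) x) atTop (𝓝 (φ x))) := by
  obtain ⟨v₀, hv₀⟩ := hCne
  have hh : Continuous fun q : H × EuclideanSpace ℝ (Fin m) => h q.1 :=
    hC1.continuous.comp continuous_fst
  have hlsc : LowerSemicontinuous fun q : H × EuclideanSpace ℝ (Fin m) => S q.1 q.2 := by
    simp only [hS]
    exact WeakDual.lowerSemicontinuous_iSup_eval_add hCcpt hΦ hh
  obtain ⟨l, b, hlb⟩ := ConvexOn.exists_affine_minorant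
    ((map_continuous v₀).comp hΦ |>.add hh).lowerSemicontinuous (hscal v₀ hv₀)
  replace hlb : ∀ q : H × EuclideanSpace ℝ (Fin m), l q + b ≤ S q.1 q.2 := fun q =>
    (hlb q).trans (hS q.1 q.2 ▸ le_ciSup (WeakDual.bddAbove_range_eval_add hCcpt _ _) ⟨v₀, hv₀⟩)
  have hmono : ∀ lam₁ lam₂ : ℝ, 0 < lam₂ → lam₂ < lam₁ → ∀ x : H,
      φ x ≤ φl lam₂ x ∧ φl lam₂ x ≤ φl lam₁ x := fun lam₁ lam₂ hlam₂ hlt x => by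
    simp only [hφ, hφl]
    exact ⟨ENNReal.toReal_mono (measure_ne_top P _) (measure_mono fun ω hω =>
        (moreauEnv2_le_self hlb hlam₂ x _).trans hω),
      ENNReal.toReal_mono (measure_ne_top P _) (measure_mono fun ω hω =>
        (moreauEnv2_anti hlb hlam₂ hlt.le x _).trans hω)⟩
  have hlim : ∀ x, Tendsto (fun lam => φl lam x) (𝓝[>] 0) (𝓝 (φ x)) := fun x => by
    simp only [hφ, hφl]
    exact (ENNReal.tendsto_toReal (measure_ne_top P _)).comp
      (tendsto_measure_moreauEnv2_le P hξ hlb hlsc x (h x))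
  exact ⟨hmono,
    fun x => iInf_pos_eq_of_tendsto_nhdsGT (fun t ht => (hmono (t + 1) t ht (lt_add_one t) x).1)
      (hlim x),
    fun x lam hpos hlam => (hlim x).comp
      (tendsto_nhdsWithin_iff.2 ⟨hlam, Eventually.of_forall hpos⟩)⟩

/-- Theorem 3.1(a): monotonicity of the regularized probability functions `φ_λ` and
pointwise convergence `inf_{λ>0} φ_λ(x) = φ(x)`, equivalently `φ_{λ_k}(x) → φ(x)` for
every sequence `λ_k → 0⁺`. -/
theorem stmt4
    {H Y : Type*} [NormedAddCommGroup H] [InnerProductSpace ℝ H] [CompleteSpace H]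
    [SecondCountableTopology H]
    [NormedAddCommGroup Y] [NormedSpace ℝ Y] [CompleteSpace Y] {m : ℕ}
    {Ω : Type*} [MeasurableSpace Ω] (P : Measure Ω) [IsProbabilityMeasure P]
    (ξ : Ω → EuclideanSpace ℝ (Fin m)) (hξ : Measurable ξ)
    (hlaw : P.map ξ ≪ volume)
    (K : Set Y) (hKne : K.Nonempty) (hKcl : IsClosed K) (hKconv : Convex ℝ K)
    (hKcone : ∀ c : ℝ, 0 ≤ c → ∀ y ∈ K, c • y ∈ K)
    (C : Set (WeakDual ℝ Y)) (hCne : C.Nonempty) (hCconv : Convex ℝ C) (hCcpt : IsCompact C)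
    (hCgen : closure {w : WeakDual ℝ Y | ∃ c : ℝ, 0 ≤ c ∧ ∃ v ∈ C, w = c • v}
      = {w : WeakDual ℝ Y | ∀ y ∈ K, 0 ≤ w y})
    (Φ : H → EuclideanSpace ℝ (Fin m) → Y)
    (hΦ : Continuous fun q : H × EuclideanSpace ℝ (Fin m) => Φ q.1 q.2)
    (h : H → ℝ) (hconv : ConvexOn ℝ Set.univ h) (hC1 : ContDiff ℝ 1 h)
    (hscal : ∀ v ∈ C, ConvexOn ℝ Set.univ
      (fun q : H × EuclideanSpace ℝ (Fin m) => v (Φ q.1 q.2) + h q.1))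
    (S : H → EuclideanSpace ℝ (Fin m) → ℝ)
    (hS : ∀ x z, S x z = ⨆ v : C, ((v : WeakDual ℝ Y) (Φ x z) + h x))
    (φ : H → ℝ)
    (hφ : ∀ x, φ x = (P {ω | S x (ξ ω) ≤ h x}).toReal)
    (φl : ℝ → H → ℝ)
    (hφl : ∀ lam x, φl lam x = (P {ω | moreauEnv2 S lam x (ξ ω) ≤ h x}).toReal)
    :
    (∀ lam₁ lam₂ : ℝ, 0 < lam₂ → lam₂ < lam₁ → ∀ x : H,
      φ x ≤ φl lam₂ x ∧ φl lam₂ x ≤ φl lam₁ x) ∧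
    (∀ x : H, (⨅ lam : {l : ℝ // 0 < l}, φl lam x) = φ x) ∧
    (∀ x : H, ∀ lam : ℕ → ℝ, (∀ k, 0 < lam k) → Tendsto lam atTop (𝓝 0) →
      Tendsto (fun k => φl (lam k) x) atTop (𝓝 (φ x))) :=
  stmt4_general P ξ hξ C hCne hCcpt Φ hΦ h hC1 hscal S hS φ hφ φl hφl
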